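/- arXiv:2605.05601 — 2 statements merged into one kernel-verified Lean document; each statement's English description precedes it below -/
import Mathlib

section
/- Deleting an element preserves the primal type of other elements in a delta-matroid: for a delta-matroid D = (E, F) and distinct elements e₁, e₂ ∈ E, the primal type (p, u, or t) of e₂ in D − e₁ equals its primal type in D. -/
/-!
The primal type of `x` is determined by whether `x` lies in a feasible set of size at most
`rmin + k`, for `k = 0` and `k = 1`. If `e` is a coloop, deletion erases `e` from every feasible
set, shifting all sizes and `rmin` by one. Otherwise deletion keeps the feasible sets avoiding `e`;
exchanging `e` between a feasible `F ∋ e` and a feasible set avoiding `e` gives a feasible set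
avoiding `e` that contains `F \ {e}` and is no larger than `F`, since `|F| ≤ rmin + 1` forbids
losing two elements. Hence neither `rmin` nor these predicates change.
-/

/-- The Symmetric Exchange Axiom for a set system. -/
def SEA {α : Type*} [DecidableEq α] (𝓕 : Finset (Finset α)) : Prop :=
  ∀ X ∈ 𝓕, ∀ Y ∈ 𝓕, ∀ u ∈ symmDiff X Y, ∃ v ∈ symmDiff X Y,
    symmDiff X ({u, v} : Finset α) ∈ 𝓕

/-- Minimum cardinality of a feasible set. -/
noncomputable def rmin {α : Type*} (𝓕 : Finset (Finset α)) : ℕ :=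
  sInf {n | ∃ F ∈ 𝓕, F.card = n}

/-- Primal type `p`: `e` lies in some minimum-cardinality feasible set. -/
noncomputable def typeP {α : Type*} (𝓕 : Finset (Finset α)) (e : α) : Prop :=
  ∃ F ∈ 𝓕, F.card = rmin 𝓕 ∧ e ∈ F

/-- Primal type `u`: `e` lies in no feasible set of cardinality
`rmin 𝓕` or `rmin 𝓕 + 1`. -/
noncomputable def typeU {α : Type*} (𝓕 : Finset (Finset α)) (e : α) : Prop :=
  ∀ F ∈ 𝓕, (F.card = rmin 𝓕 ∨ F.card = rmin 𝓕 + 1) → e ∉ F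

/-- Primal type `t`: `e` lies in no minimum feasible set, but lies in some
feasible set of cardinality `rmin 𝓕 + 1`. -/
noncomputable def typeT {α : Type*} (𝓕 : Finset (Finset α)) (e : α) : Prop :=
  (∀ F ∈ 𝓕, F.card = rmin 𝓕 → e ∉ F) ∧ ∃ F ∈ 𝓕, F.card = rmin 𝓕 + 1 ∧ e ∈ F

/-- Deletion of a single element from a set system. -/
def delSys {α : Type*} [DecidableEq α] (𝓕 : Finset (Finset α)) (e : α) :
    Finset (Finset α) :=
  if ∀ F ∈ 𝓕, e ∈ F then 𝓕.image (fun F => F.erase e)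
  else 𝓕.filter (fun F => e ∉ F)

open Finset

section

variable {α : Type*} {𝓕 : Finset (Finset α)}

theorem rmin_le {F : Finset α} (hF : F ∈ 𝓕) : rmin 𝓕 ≤ F.card :=
  Nat.sInf_le ⟨F, hF, rfl⟩

theorem exists_card_eq_rmin (h : 𝓕.Nonempty) : ∃ F ∈ 𝓕, F.card = rmin 𝓕 :=
  let ⟨F, hF⟩ := h
  Nat.sInf_mem (s := {n | ∃ F ∈ 𝓕, F.card = n}) ⟨F.card, F, hF, rfl⟩

def MemFeasibleWithin (𝓕 : Finset (Finset α)) (x : α) (k : ℕ) : Prop :=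
  ∃ F ∈ 𝓕, F.card ≤ rmin 𝓕 + k ∧ x ∈ F

theorem typeP_iff (x : α) : typeP 𝓕 x ↔ MemFeasibleWithin 𝓕 x 0 :=
  ⟨fun ⟨F, hF, hc, hx⟩ => ⟨F, hF, hc.le, hx⟩,
    fun ⟨F, hF, hc, hx⟩ => ⟨F, hF, le_antisymm hc (rmin_le hF), hx⟩⟩

theorem typeU_iff (x : α) : typeU 𝓕 x ↔ ¬ MemFeasibleWithin 𝓕 x 1 := by
  constructor
  · rintro hU ⟨F, hF, hc, hx⟩
    have := rmin_le hF
    exact hU F hF (by omega) hx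
  · intro hW F hF hc hx
    exact hW ⟨F, hF, by omega, hx⟩

theorem typeT_iff (x : α) :
    typeT 𝓕 x ↔ ¬ MemFeasibleWithin 𝓕 x 0 ∧ MemFeasibleWithin 𝓕 x 1 := by
  rw [← typeP_iff]
  constructor
  · rintro ⟨hnotP, F, hF, hc, hx⟩
    exact ⟨fun ⟨G, hG, hGc, hGx⟩ => hnotP G hG hGc hGx, F, hF, hc.le, hx⟩
  · rintro ⟨hnotP, F, hF, hc, hx⟩
    have hne : F.card ≠ rmin 𝓕 := fun h => hnotP ⟨F, hF, h, hx⟩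
    have := rmin_le hF
    exact ⟨fun G hG hGc hGx => hnotP ⟨G, hG, hGc, hGx⟩, F, hF, by omega, hx⟩

variable [DecidableEq α]

theorem rmin_image_erase_add_one {e : α} (hne : 𝓕.Nonempty) (hcoloop : ∀ F ∈ 𝓕, e ∈ F) :
    rmin (𝓕.image fun F => F.erase e) + 1 = rmin 𝓕 := by
  obtain ⟨F, hF, hFc⟩ := exists_card_eq_rmin hne
  obtain ⟨G, hG, hGc⟩ := exists_card_eq_rmin (hne.image fun F => F.erase e)
  obtain ⟨F', hF', rfl⟩ := mem_image.1 hG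
  have := rmin_le (mem_image_of_mem (fun F => F.erase e) hF)
  have := rmin_le hF'
  have := card_erase_add_one (hcoloop F hF)
  have := card_erase_add_one (hcoloop F' hF')
  omega

theorem memFeasibleWithin_image_erase_iff {e x : α} (hxe : x ≠ e)
    (hcoloop : ∀ F ∈ 𝓕, e ∈ F) (k : ℕ) :
    MemFeasibleWithin (𝓕.image fun F => F.erase e) x k ↔ MemFeasibleWithin 𝓕 x k := by
  constructor
  · rintro ⟨G, hG, hc, hx⟩
    obtain ⟨F, hF, rfl⟩ := mem_image.1 hG
    have := rmin_image_erase_add_one ⟨F, hF⟩ hcoloop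
    have := card_erase_add_one (hcoloop F hF)
    exact ⟨F, hF, by omega, mem_of_mem_erase hx⟩
  · rintro ⟨F, hF, hc, hx⟩
    have := rmin_image_erase_add_one ⟨F, hF⟩ hcoloop
    have := card_erase_add_one (hcoloop F hF)
    exact ⟨F.erase e, mem_image_of_mem _ hF, by omega, mem_erase.2 ⟨hxe, hx⟩⟩

theorem SEA.exists_erase_subset (hSEA : SEA 𝓕) {X F : Finset α} {e : α}
    (hX : X ∈ 𝓕) (heX : e ∉ X) (hF : F ∈ 𝓕) (heF : e ∈ F) (hFc : F.card ≤ rmin 𝓕 + 1) :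
    ∃ G ∈ 𝓕, e ∉ G ∧ F.erase e ⊆ G ∧ G.card ≤ F.card := by
  obtain ⟨v, -, hG⟩ := hSEA F hF X hX e (by simp [mem_symmDiff, heF, heX])
  set G := symmDiff F {e, v}
  by_cases hv : v ∈ F.erase e
  · have hG_eq : G = (F.erase e).erase v := by
      ext y
      simp only [G, mem_symmDiff, mem_insert, mem_singleton, mem_erase]
      by_cases hyv : y = v <;> by_cases hye : y = e <;> simp_all
    rw [hG_eq] at hG
    have := card_erase_add_one hv
    have := card_erase_add_one heF
    have := rmin_le hG
    omega
  · refine ⟨G, hG, by simp [G, mem_symmDiff, heF], ?_, ?_⟩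
    · intro y hy
      have hyv : y ≠ v := fun h => hv (h ▸ hy)
      simp_all [G, mem_symmDiff]
    · have hG_sub : G ⊆ insert v (F.erase e) := by
        intro y hy
        simp only [G, mem_symmDiff, mem_insert, mem_singleton, mem_erase] at hy ⊢
        rcases eq_or_ne y e with rfl | hye <;> tauto
      calc G.card ≤ (insert v (F.erase e)).card := card_le_card hG_sub
        _ ≤ (F.erase e).card + 1 := card_insert_le _ _
        _ = F.card := card_erase_add_one heF

theorem SEA.rmin_filter_notMem (hSEA : SEA 𝓕) {X : Finset α} {e : α}
    (hX : X ∈ 𝓕) (heX : e ∉ X) : rmin (𝓕.filter fun F => e ∉ F) = rmin 𝓕 := by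
  obtain ⟨F, hF, hFc⟩ := exists_card_eq_rmin ⟨X, hX⟩
  obtain ⟨G, hG, hGc⟩ := exists_card_eq_rmin (𝓕 := 𝓕.filter fun F => e ∉ F)
    ⟨X, mem_filter.2 ⟨hX, heX⟩⟩
  obtain ⟨F', hF', heF', hF'c⟩ : ∃ F' ∈ 𝓕, e ∉ F' ∧ F'.card ≤ F.card := by
    by_cases heF : e ∈ F
    · obtain ⟨G, hG, heG, -, hc⟩ := hSEA.exists_erase_subset hX heX hF heF (by omega)
      exact ⟨G, hG, heG, hc⟩
    · exact ⟨F, hF, heF, le_rfl⟩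
  have := rmin_le (mem_filter.1 hG).1
  have := rmin_le (𝓕 := 𝓕.filter fun F => e ∉ F) (mem_filter.2 ⟨hF', heF'⟩)
  omega

theorem SEA.memFeasibleWithin_filter_notMem_iff (hSEA : SEA 𝓕) {X : Finset α} {e x : α}
    (hX : X ∈ 𝓕) (heX : e ∉ X) (hxe : x ≠ e) {k : ℕ} (hk : k ≤ 1) :
    MemFeasibleWithin (𝓕.filter fun F => e ∉ F) x k ↔ MemFeasibleWithin 𝓕 x k := by
  rw [MemFeasibleWithin, hSEA.rmin_filter_notMem hX heX]
  constructor
  · rintro ⟨G, hG, hc, hx⟩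
    exact ⟨G, (mem_filter.1 hG).1, hc, hx⟩
  · rintro ⟨F, hF, hc, hx⟩
    by_cases heF : e ∈ F
    · obtain ⟨G, hG, heG, hsub, hGc⟩ := hSEA.exists_erase_subset hX heX hF heF (by omega)
      exact ⟨G, mem_filter.2 ⟨hG, heG⟩, by omega, hsub (mem_erase.2 ⟨hxe, hx⟩)⟩
    · exact ⟨F, mem_filter.2 ⟨hF, heF⟩, hc, hx⟩

theorem SEA.memFeasibleWithin_delSys_iff (hSEA : SEA 𝓕) {e x : α} (hxe : x ≠ e)
    {k : ℕ} (hk : k ≤ 1) :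
    MemFeasibleWithin (delSys 𝓕 e) x k ↔ MemFeasibleWithin 𝓕 x k := by
  unfold delSys
  split_ifs with hcoloop
  · exact memFeasibleWithin_image_erase_iff hxe hcoloop k
  · obtain ⟨X, hX, heX⟩ := not_forall₂.1 hcoloop
    exact hSEA.memFeasibleWithin_filter_notMem_iff hX heX hxe hk

end

theorem del_preserves_primal_type_general {α : Type*} [DecidableEq α] (𝓕 : Finset (Finset α))
    (hSEA : SEA 𝓕) (e₁ e₂ : α) (h12 : e₁ ≠ e₂) :
    (typeP (delSys 𝓕 e₁) e₂ ↔ typeP 𝓕 e₂) ∧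
    (typeU (delSys 𝓕 e₁) e₂ ↔ typeU 𝓕 e₂) ∧
    (typeT (delSys 𝓕 e₁) e₂ ↔ typeT 𝓕 e₂) := by
  simp only [typeP_iff, typeU_iff, typeT_iff,
    hSEA.memFeasibleWithin_delSys_iff h12.symm zero_le_one,
    hSEA.memFeasibleWithin_delSys_iff h12.symm le_rfl, and_self]

/-- Deleting an element preserves the primal type of the other elements
in a delta-matroid. -/
theorem del_preserves_primal_type {α : Type*} [DecidableEq α] (𝓕 : Finset (Finset α))
    (hne : 𝓕.Nonempty) (hSEA : SEA 𝓕) (e₁ e₂ : α) (h12 : e₁ ≠ e₂) :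
    (typeP (delSys 𝓕 e₁) e₂ ↔ typeP 𝓕 e₂) ∧
    (typeU (delSys 𝓕 e₁) e₂ ↔ typeU 𝓕 e₂) ∧
    (typeT (delSys 𝓕 e₁) e₂ ↔ typeT 𝓕 e₂) :=
  del_preserves_primal_type_general 𝓕 hSEA e₁ e₂ h12
end

section
/- In the proof of primal-type preservation: if D is a delta-matroid, e₁ is not a coloop, e₂ ≠ e₁ lies in some minimum feasible set, then there exists a minimum-cardinality feasible set F with e₂ ∈ F and e₁ ∉ F. -/
theorem rmin_le_card {α : Type*} {𝓕 : Finset (Finset α)} {F : Finset α} (hF : F ∈ 𝓕) :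
    rmin 𝓕 ≤ F.card :=
  Nat.sInf_le ⟨F, hF, rfl⟩

namespace Finset

variable {α : Type*} [DecidableEq α] {A : Finset α} {e v : α}

theorem symmDiff_pair_ssubset (he : e ∈ A) (hv : v ∈ A) : symmDiff A {e, v} ⊂ A := by
  have hsub : ({e, v} : Finset α) ⊆ A := insert_subset he (singleton_subset_iff.mpr hv)
  rw [symmDiff_of_ge hsub]
  exact sdiff_ssubset hsub (insert_nonempty e {v})

theorem symmDiff_pair_eq_insert_erase (he : e ∈ A) (hv : v ∉ A) :
    symmDiff A {e, v} = insert v (A.erase e) := by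
  ext x
  by_cases hxe : x = e <;> by_cases hxv : x = v <;> subst_vars <;> simp_all [mem_symmDiff]

end Finset

open Finset in
theorem SEA.exists_insert_erase_mem {α : Type*} [DecidableEq α] {𝓕 : Finset (Finset α)}
    (hSEA : SEA 𝓕) {A B : Finset α} (hA : A ∈ 𝓕) (hAmin : ∀ F ∈ 𝓕, A.card ≤ F.card)
    (hB : B ∈ 𝓕) {e : α} (heA : e ∈ A) (heB : e ∉ B) :
    ∃ v ∉ A, insert v (A.erase e) ∈ 𝓕 := by
  obtain ⟨v, -, hfeas⟩ := hSEA A hA B hB e (by simp [mem_symmDiff, heA, heB])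
  have hvA : v ∉ A := fun hvA =>
    (card_lt_card (symmDiff_pair_ssubset heA hvA)).not_ge (hAmin _ hfeas)
  exact ⟨v, hvA, symmDiff_pair_eq_insert_erase heA hvA ▸ hfeas⟩

open Finset in
theorem min_feasible_avoiding_general {α : Type*} [DecidableEq α] (𝓕 : Finset (Finset α))
    (hSEA : SEA 𝓕) (e₁ e₂ : α) (h12 : e₂ ≠ e₁)
    (hcoloop : ∃ F ∈ 𝓕, e₁ ∉ F)
    (h2 : ∃ F ∈ 𝓕, F.card = rmin 𝓕 ∧ e₂ ∈ F) :
    ∃ F ∈ 𝓕, F.card = rmin 𝓕 ∧ e₂ ∈ F ∧ e₁ ∉ F := by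
  obtain ⟨A, hA, hAcard, hA2⟩ := h2
  by_cases hA1 : e₁ ∈ A
  case neg => exact ⟨A, hA, hAcard, hA2, hA1⟩
  obtain ⟨B, hB, hB1⟩ := hcoloop
  have hAmin : ∀ F ∈ 𝓕, A.card ≤ F.card := fun F hF => hAcard ▸ rmin_le_card hF
  obtain ⟨v, hvA, hfeas⟩ := hSEA.exists_insert_erase_mem hA hAmin hB hA1 hB1
  refine ⟨_, hfeas, ?_, mem_insert_of_mem (mem_erase.mpr ⟨h12, hA2⟩), ?_⟩
  · rw [card_insert_of_notMem (fun h => hvA (mem_of_mem_erase h)), card_erase_add_one hA1,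
      hAcard]
  · rw [mem_insert, not_or]
    exact ⟨fun h => hvA (h ▸ hA1), notMem_erase e₁ A⟩

/-- If `e₁` is not a coloop of a delta-matroid and `e₂ ≠ e₁` lies in some minimum
feasible set, then some minimum feasible set contains `e₂` but not `e₁`. -/
theorem min_feasible_avoiding {α : Type*} [DecidableEq α] (𝓕 : Finset (Finset α))
    (hne : 𝓕.Nonempty) (hSEA : SEA 𝓕) (e₁ e₂ : α) (h12 : e₂ ≠ e₁)
    (hcoloop : ∃ F ∈ 𝓕, e₁ ∉ F)
    (h2 : ∃ F ∈ 𝓕, F.card = rmin 𝓕 ∧ e₂ ∈ F) :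
    ∃ F ∈ 𝓕, F.card = rmin 𝓕 ∧ e₂ ∈ F ∧ e₁ ∉ F :=
  min_feasible_avoiding_general 𝓕 hSEA e₁ e₂ h12 hcoloop h2
end
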